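/- arXiv:0911.0885 — 4 statements merged into one kernel-verified Lean document; each statement's English description precedes it below -/
import Mathlib

section
/- Let φ be a proper 3-coloring, with colors {1,2,3}, of a cycle with vertices v_1, …, v_k listed in cyclic order (indices modulo k). For colors a ≠ b let N_{ab} denote the number of indices i with φ(v_i) = a and φ(v_{i+1}) = b. Then N_{12} − N_{21} = N_{23} − N_{32} = N_{31} − N_{13}. -/
/-- `colorPairs k φ a b` is the number of indices `i` (modulo `k`) with
`φ(v_i) = a` and `φ(v_{i+1}) = b`, for a 3-coloring `φ` of a cycle whose vertices
are `v_1, …, v_k` in cyclic order (vertex `v_{i+1}` is represented by `i : ZMod k`).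
Colors lie in `ZMod 3`, where `1` and `2` are the colors 1 and 2 and `0`
represents the color 3. -/
def colorPairs (k : ℕ) (φ : ZMod k → ZMod 3) (a b : ZMod 3) : ℤ :=
  ∑ i ∈ Finset.range k,
    (if φ (i : ZMod k) = a ∧ φ ((i : ZMod k) + 1) = b then 1 else 0)

lemma sum_range_eq_sum_zmod (k : ℕ) [NeZero k] (f : ZMod k → ℤ) :
    (∑ i ∈ Finset.range k, f (i : ZMod k)) = ∑ j : ZMod k, f j := by
  refine Finset.sum_nbij' (i := fun i => (i : ZMod k)) (j := fun j => j.val) ?_ ?_ ?_ ?_ ?_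
  · intro a _; exact Finset.mem_univ _
  · intro b _; exact Finset.mem_range.mpr (ZMod.val_lt b)
  · intro a ha; exact ZMod.val_cast_of_lt (Finset.mem_range.mp ha)
  · intro b _; simp [ZMod.natCast_val, ZMod.cast_id]
  · intro a _; rfl

lemma colorPairs_eq (k : ℕ) [NeZero k] (φ : ZMod k → ZMod 3) (a b : ZMod 3) :
    colorPairs k φ a b = ∑ j : ZMod k, (if φ j = a ∧ φ (j + 1) = b then (1 : ℤ) else 0) := by
  unfold colorPairs
  exact sum_range_eq_sum_zmod k (fun j => if φ j = a ∧ φ (j + 1) = b then 1 else 0)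

lemma key (k : ℕ) [NeZero k] (φ : ZMod k → ZMod 3)
    (hφ : ∀ i : ZMod k, φ i ≠ φ (i + 1)) (a b c : ZMod 3)
    (hcov : ∀ x y : ZMod 3, x ≠ y →
      ((if x = a ∧ y = b then (1 : ℤ) else 0) + (if x = a ∧ y = c then 1 else 0)
        = if x = a then 1 else 0) ∧
      ((if x = b ∧ y = a then (1 : ℤ) else 0) + (if x = c ∧ y = a then 1 else 0)
        = if y = a then 1 else 0)) :
    colorPairs k φ a b + colorPairs k φ a c
      = colorPairs k φ b a + colorPairs k φ c a := by
  rw [colorPairs_eq, colorPairs_eq, colorPairs_eq, colorPairs_eq,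
    ← Finset.sum_add_distrib, ← Finset.sum_add_distrib]
  have h1 : ∀ j : ZMod k,
      ((if φ j = a ∧ φ (j+1) = b then (1 : ℤ) else 0) + (if φ j = a ∧ φ (j+1) = c then 1 else 0))
        = if φ j = a then 1 else 0 := fun j => (hcov _ _ (hφ j)).1
  have h2 : ∀ j : ZMod k,
      ((if φ j = b ∧ φ (j+1) = a then (1 : ℤ) else 0) + (if φ j = c ∧ φ (j+1) = a then 1 else 0))
        = if φ (j+1) = a then 1 else 0 := fun j => (hcov _ _ (hφ j)).2
  simp only [h1, h2]
  refine Fintype.sum_equiv (Equiv.subRight (1 : ZMod k)) _ _ (fun j => ?_)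
  simp [Equiv.subRight]

/-- For a proper 3-coloring of a cycle, with `N_{ab} = colorPairs k φ a b`, one has
`N_{12} − N_{21} = N_{23} − N_{32} = N_{31} − N_{13}` (the color 3 is `0 : ZMod 3`). -/
theorem stmt_2 (k : ℕ) (hk : 3 ≤ k) (φ : ZMod k → ZMod 3)
    (hφ : ∀ i : ZMod k, φ i ≠ φ (i + 1)) :
    colorPairs k φ 1 2 - colorPairs k φ 2 1 = colorPairs k φ 2 0 - colorPairs k φ 0 2 ∧
    colorPairs k φ 2 0 - colorPairs k φ 0 2 = colorPairs k φ 0 1 - colorPairs k φ 1 0 := by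
  haveI : NeZero k := ⟨by omega⟩
  have e1 := key k φ hφ 1 2 0 (by decide)
  have e0 := key k φ hφ 0 1 2 (by decide)
  constructor <;> omega
end

section
/- Let φ be a proper 3-coloring, with colors {1,2,3}, of a cycle with vertices v_1, …, v_k listed in cyclic order, and let σ be a permutation of {1,2,3}. Then σ ∘ φ is a proper 3-coloring of the cycle and its winding number (with respect to the same cyclic order) equals sgn(σ) times the winding number of φ; in particular, swapping two of the three colors negates the winding number. -/
/-- The winding number of a 3-coloring `φ` of a cycle whose vertices are
`v_1, …, v_k` in cyclic order (vertex `v_{i+1}` is represented by `i : ZMod k`).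
Colors lie in `ZMod 3`, where `1` and `2` are the colors 1 and 2 and `0`
represents the color 3. -/
def winding (k : ℕ) (φ : ZMod k → ZMod 3) : ℤ :=
  ∑ i ∈ Finset.range k,
    ((if φ (i : ZMod k) = 1 ∧ φ ((i : ZMod k) + 1) = 2 then 1 else 0)
      - (if φ (i : ZMod k) = 2 ∧ φ ((i : ZMod k) + 1) = 1 then 1 else 0))

private def dd : ZMod 3 → ℤ := fun x => if x = 1 then 1 else if x = 2 then -1 else 0
private def GG : ZMod 3 → ℤ := fun x => if x = 1 then 0 else if x = 2 then 2 else 1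

private lemma key1 : ∀ a b : ZMod 3, a ≠ b →
    3 * ((if a = 1 ∧ b = 2 then (1:ℤ) else 0) - (if a = 2 ∧ b = 1 then 1 else 0))
      = dd (b - a) + GG b - GG a := by decide

private lemma key2 : ∀ (σ : Equiv.Perm (ZMod 3)) (a b : ZMod 3), a ≠ b →
    dd (σ b - σ a) = ((Equiv.Perm.sign σ : ℤˣ) : ℤ) * dd (b - a) := by decide

private lemma key3 (k : ℕ) (φ : ZMod k → ZMod 3) (hφ : ∀ i : ZMod k, φ i ≠ φ (i + 1)) :
    3 * winding k φ = ∑ i ∈ Finset.range k, dd (φ ((i : ZMod k) + 1) - φ (i : ZMod k)) := by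
  unfold winding
  rw [Finset.mul_sum]
  have tel : ∑ i ∈ Finset.range k,
      (GG (φ ((i : ZMod k) + 1)) - GG (φ (i : ZMod k))) = 0 := by
    have h := Finset.sum_range_sub (fun n : ℕ => GG (φ (n : ZMod k))) k
    have hc : ∀ n : ℕ, ((n + 1 : ℕ) : ZMod k) = (n : ZMod k) + 1 := by
      intro n; push_cast; ring
    simp only [hc] at h
    rw [h]
    simp [ZMod.natCast_self]
  have := Finset.sum_congr rfl (fun i (_ : i ∈ Finset.range k) =>
    key1 (φ (i : ZMod k)) (φ ((i : ZMod k) + 1)) (hφ _))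
  rw [this]
  rw [show (fun i : ℕ => dd (φ ((i:ZMod k)+1) - φ (i:ZMod k)) + GG (φ ((i:ZMod k)+1))
      - GG (φ (i:ZMod k))) = (fun i : ℕ => dd (φ ((i:ZMod k)+1) - φ (i:ZMod k)) +
      (GG (φ ((i:ZMod k)+1)) - GG (φ (i:ZMod k)))) from by funext i; ring]
  rw [Finset.sum_add_distrib, tel, add_zero]

/-- Composing a proper 3-coloring of a cycle with a permutation `σ` of the three
colors yields a proper 3-coloring whose winding number is `sgn σ` times the
original winding number. -/
theorem stmt_3 (k : ℕ) (hk : 3 ≤ k) (φ : ZMod k → ZMod 3)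
    (hφ : ∀ i : ZMod k, φ i ≠ φ (i + 1)) (σ : Equiv.Perm (ZMod 3)) :
    (∀ i : ZMod k, σ (φ i) ≠ σ (φ (i + 1))) ∧
    winding k (fun i => σ (φ i)) = ((Equiv.Perm.sign σ : ℤˣ) : ℤ) * winding k φ := by
  have hσφ : ∀ i : ZMod k, σ (φ i) ≠ σ (φ (i + 1)) :=
    fun i h => hφ i (σ.injective h)
  refine ⟨hσφ, ?_⟩
  have h1 := key3 k (fun i => σ (φ i)) hσφ
  have h2 := key3 k φ hφ
  have h3 : ∑ i ∈ Finset.range k, dd (σ (φ ((i : ZMod k) + 1)) - σ (φ (i : ZMod k)))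
      = ((Equiv.Perm.sign σ : ℤˣ) : ℤ) * ∑ i ∈ Finset.range k,
        dd (φ ((i : ZMod k) + 1) - φ (i : ZMod k)) := by
    rw [Finset.mul_sum]
    exact Finset.sum_congr rfl (fun i _ => key2 σ _ _ (hφ _))
  have : (3:ℤ) * winding k (fun i => σ (φ i))
      = 3 * (((Equiv.Perm.sign σ : ℤˣ) : ℤ) * winding k φ) := by
    rw [h1, h3, ← h2]; ring
  exact mul_left_cancel₀ (by norm_num) this
end

section
/- Let r ≥ 3 and s ≥ 1 be integers and let G be the r×s cylindrical grid. Then for every proper 3-coloring ψ of G with colors {1,2,3}, the winding numbers of ψ on the hoops D_1, D_2, …, D_s (each computed with respect to the cyclic order of increasing first coordinate) are all equal. -/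
def cylGrid (r s : ℕ) : SimpleGraph (ZMod r × Fin s) where
  Adj u v := u ≠ v ∧
    ((u.2 = v.2 ∧ (v.1 = u.1 + 1 ∨ u.1 = v.1 + 1)) ∨
      (u.1 = v.1 ∧ (u.2.val + 1 = v.2.val ∨ v.2.val + 1 = u.2.val)))
  symm := by
    constructor
    rintro u v ⟨hne, h⟩
    refine ⟨hne.symm, ?_⟩
    rcases h with ⟨h1, h2⟩ | ⟨h1, h2⟩
    · exact Or.inl ⟨h1.symm, h2.symm⟩
    · exact Or.inr ⟨h1.symm, h2.symm⟩
  loopless := by constructor; rintro u ⟨hne, -⟩; exact hne rfl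

def eta (a b : ZMod 3) : ℤ :=
  (if a = 1 ∧ b = 2 then 1 else 0) - (if a = 2 ∧ b = 1 then 1 else 0)

lemma eta_key : ∀ a b c d : ZMod 3, a ≠ b → c ≠ d → a ≠ c → b ≠ d →
    eta a b - eta c d = eta a c - eta b d := by decide

lemma winding_eq_sum (k : ℕ) (φ : ZMod k → ZMod 3) :
    winding k φ = ∑ i ∈ Finset.range k, eta (φ (i : ZMod k)) (φ ((i : ZMod k) + 1)) := rfl

lemma sum_range_zmod (r : ℕ) [NeZero r] (F : ZMod r → ℤ) :
    ∑ i ∈ Finset.range r, F (i : ZMod r) = ∑ x : ZMod r, F x := by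
  refine Finset.sum_nbij' (fun i => (i : ZMod r)) (fun x => x.val) ?_ ?_ ?_ ?_ ?_
  · intros; exact Finset.mem_univ _
  · intro x _; exact Finset.mem_range.mpr (ZMod.val_lt x)
  · intro i hi; exact ZMod.val_natCast_of_lt (Finset.mem_range.mp hi)
  · intro x _; exact ZMod.natCast_zmod_val x
  · intros; rfl

lemma winding_adj_rows (r : ℕ) [NeZero r] (φ φ' : ZMod r → ZMod 3)
    (h1 : ∀ i, φ i ≠ φ (i + 1)) (h2 : ∀ i, φ' i ≠ φ' (i + 1))
    (h3 : ∀ i, φ i ≠ φ' i) :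
    winding r φ = winding r φ' := by
  have key : winding r φ - winding r φ'
      = (∑ i ∈ Finset.range r, eta (φ (i : ZMod r)) (φ' (i : ZMod r)))
        - ∑ i ∈ Finset.range r, eta (φ ((i : ZMod r) + 1)) (φ' ((i : ZMod r) + 1)) := by
    rw [winding_eq_sum, winding_eq_sum, ← Finset.sum_sub_distrib, ← Finset.sum_sub_distrib]
    refine Finset.sum_congr rfl fun i _ => ?_
    exact eta_key _ _ _ _ (h1 _) (h2 _) (h3 _) (h3 _)
  have h4 : (∑ i ∈ Finset.range r, eta (φ ((i : ZMod r) + 1)) (φ' ((i : ZMod r) + 1)))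
      = ∑ i ∈ Finset.range r, eta (φ (i : ZMod r)) (φ' (i : ZMod r)) := by
    rw [sum_range_zmod r (fun x => eta (φ (x + 1)) (φ' (x + 1))),
      sum_range_zmod r (fun x => eta (φ x) (φ' x))]
    exact Fintype.sum_equiv (Equiv.addRight (1 : ZMod r)) _ _ (fun x => rfl)
  omega

/-- For every proper 3-coloring `ψ` of the `r × s` cylindrical grid, the winding
numbers of `ψ` on all the hoops `D_1, …, D_s` (each computed with respect to the
cyclic order of increasing first coordinate) are equal. -/
theorem stmt_4 (r s : ℕ) (hr : 3 ≤ r) (hs : 1 ≤ s)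
    (ψ : ZMod r × Fin s → ZMod 3)
    (hψ : ∀ u v : ZMod r × Fin s, (cylGrid r s).Adj u v → ψ u ≠ ψ v)
    (j j' : Fin s) :
    winding r (fun i => ψ (i, j)) = winding r (fun i => ψ (i, j')) := by
  haveI : NeZero r := ⟨by omega⟩
  haveI : Fact (1 < r) := ⟨by omega⟩
  -- horizontal properness
  have hrow : ∀ (j : Fin s) (i : ZMod r), ψ (i, j) ≠ ψ (i + 1, j) := by
    intro j i
    refine hψ _ _ ⟨?_, Or.inl ⟨rfl, Or.inl rfl⟩⟩
    intro hc
    have : i = i + 1 := congrArg Prod.fst hc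
    exact (one_ne_zero : (1 : ZMod r) ≠ 0) (left_eq_add.mp this)
  -- adjacent hoops
  have hstep : ∀ (a b : Fin s), (a.val + 1 = b.val) →
      winding r (fun i => ψ (i, a)) = winding r (fun i => ψ (i, b)) := by
    intro a b hab
    refine winding_adj_rows r _ _ (fun i => hrow a i) (fun i => hrow b i) (fun i => ?_)
    refine hψ _ _ ⟨?_, Or.inr ⟨rfl, Or.inl hab⟩⟩
    intro hc
    have hv : a.val = b.val := congrArg (fun x => x.2.val) hc
    omega
  -- all equal to hoop 0
  have hzero : ∀ n (hn : n < s),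
      winding r (fun i => ψ (i, (⟨n, hn⟩ : Fin s))) =
        winding r (fun i => ψ (i, (⟨0, by omega⟩ : Fin s))) := by
    intro n
    induction n with
    | zero => intro hn; rfl
    | succ m ih =>
      intro hn
      have := hstep ⟨m, by omega⟩ ⟨m + 1, hn⟩ rfl
      rw [← this]; exact ih (by omega)
  have hj := hzero j.val j.isLt
  have hj' := hzero j'.val j'.isLt
  simp only [Fin.eta] at hj hj'
  rw [hj, hj']
end

section
/- Let d ≥ 1 be an integer, let G be a simple graph, and let 𝒮 be a family of distinct subsets of V(G) such that every two distinct sets of 𝒮 are at distance at least 2d in G. Let C be a cycle in G of length four that is at distance at most d − 1 from some set S_0 ∈ 𝒮, and assume that for each pair u, v of diagonally opposite vertices of C, some pair of distinct sets in 𝒮 are at distance at most 2d − 1 in the graph obtained from G by identifying u and v. Then C is S_0-tight. -/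
open scoped ENNReal

/-- The distance between two vertex sets `X` and `Y` of a graph `G`: the minimum
length of a path of `G` with one end in `X` and the other end in `Y` (`⊤` if
there is no such path). -/
noncomputable def setDist {V : Type*} (G : SimpleGraph V) (X Y : Set V) : ℕ∞ :=
  ⨅ x ∈ X, ⨅ y ∈ Y, G.edist x y

/-- The graph obtained from `G` by identifying the vertices `u` and `v` (merging
`v` into `u`), with all resulting loops and parallel edges deleted.  The merged
vertex is `u`; the vertex `v` remains as an isolated vertex. -/
def identify {V : Type*} [DecidableEq V] (G : SimpleGraph V) (u v : V) :
    SimpleGraph V where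
  Adj a b := a ≠ b ∧ ∃ a' b', G.Adj a' b' ∧
      (if a' = v then u else a') = a ∧ (if b' = v then u else b') = b
  symm := by
    constructor
    rintro a b ⟨hne, a', b', hab, ha, hb⟩
    exact ⟨hne.symm, b', a', hab.symm, hb, ha⟩
  loopless := by constructor; rintro a ⟨hne, -⟩; exact hne rfl

/-- A cycle `v₁v₂v₃v₄` of length four in `G` is `S`-tight if its vertices can be
numbered (in cyclic order) so that for some integer `t ≥ 0` the first two are at
distance exactly `t` from `S` and the other two are at distance exactly `t + 1`
from `S`. -/
def STight {V : Type*} (G : SimpleGraph V) (S : Set V) (v1 v2 v3 v4 : V) : Prop :=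
  ∃ t : ℕ,
    (setDist G {v1} S = (t : ℕ∞) ∧ setDist G {v2} S = (t : ℕ∞) ∧
      setDist G {v3} S = (t : ℕ∞) + 1 ∧ setDist G {v4} S = (t : ℕ∞) + 1) ∨
    (setDist G {v2} S = (t : ℕ∞) ∧ setDist G {v3} S = (t : ℕ∞) ∧
      setDist G {v4} S = (t : ℕ∞) + 1 ∧ setDist G {v1} S = (t : ℕ∞) + 1) ∨
    (setDist G {v3} S = (t : ℕ∞) ∧ setDist G {v4} S = (t : ℕ∞) ∧
      setDist G {v1} S = (t : ℕ∞) + 1 ∧ setDist G {v2} S = (t : ℕ∞) + 1) ∨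
    (setDist G {v4} S = (t : ℕ∞) ∧ setDist G {v1} S = (t : ℕ∞) ∧
      setDist G {v2} S = (t : ℕ∞) + 1 ∧ setDist G {v3} S = (t : ℕ∞) + 1)

namespace Aux

open SimpleGraph

variable {V : Type*}

lemma f_eq (u v x y : V) [DecidableEq V]
    (h : (if x = v then u else x) = (if y = v then u else y)) :
    x = y ∨ (x ∈ ({u, v} : Set V) ∧ y ∈ ({u, v} : Set V)) := by
  split_ifs at h with h1 h2 h2
  · exact Or.inl (h1.trans h2.symm)
  · exact Or.inr ⟨by simp [h1], by simp [← h]⟩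
  · exact Or.inr ⟨by simp [h], by simp [h2]⟩
  · exact Or.inl h

lemma identify_lift [DecidableEq V] (G : SimpleGraph V) (u v : V) :
    ∀ {a b : V} (p : (identify G u v).Walk a b) (a' : V),
      (if a' = v then u else a') = a →
      ∃ b', (if b' = v then u else b') = b ∧
        (G.edist a' b' ≤ (p.length : ℕ∞) ∨
         ∃ x ∈ ({u, v} : Set V), ∃ y ∈ ({u, v} : Set V),
           G.edist a' x + G.edist y b' ≤ (p.length : ℕ∞)) := by
  intro a b p
  induction p with
  | nil => exact fun a' ha' => ⟨a', ha', Or.inl (by simp [SimpleGraph.edist_self])⟩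
  | @cons a c b hadj p ih =>
    intro a' ha'
    simp only [Walk.length_cons, Nat.cast_add, Nat.cast_one]
    obtain ⟨hne, a'', b'', hG, ha'', hb''⟩ := id hadj
    obtain ⟨b', hb', hcase⟩ := ih b'' hb''
    refine ⟨b', hb', ?_⟩
    have hG1 : G.edist a'' b'' ≤ 1 := le_of_eq (edist_eq_one_iff_adj.mpr hG)
    rcases f_eq u v a' a'' (ha'.trans ha''.symm) with rfl | ⟨hau, haa⟩
    · rcases hcase with hc | ⟨x, hx, y, hy, hsum⟩
      · left
        calc G.edist a' b' ≤ G.edist a' b'' + G.edist b'' b' := SimpleGraph.edist_triangle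
          _ ≤ 1 + (p.length : ℕ∞) := add_le_add hG1 hc
          _ = (p.length : ℕ∞) + 1 := add_comm _ _
      · right
        refine ⟨x, hx, y, hy, ?_⟩
        calc G.edist a' x + G.edist y b'
            ≤ (G.edist a' b'' + G.edist b'' x) + G.edist y b' :=
              add_le_add_left SimpleGraph.edist_triangle _
          _ = G.edist a' b'' + (G.edist b'' x + G.edist y b') := add_assoc _ _ _
          _ ≤ 1 + (p.length : ℕ∞) := add_le_add hG1 hsum
          _ = (p.length : ℕ∞) + 1 := add_comm _ _
    · rcases hcase with hc | ⟨x, hx, y, hy, hsum⟩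
      · right
        refine ⟨a', hau, a'', haa, ?_⟩
        rw [SimpleGraph.edist_self, zero_add]
        calc G.edist a'' b' ≤ G.edist a'' b'' + G.edist b'' b' := SimpleGraph.edist_triangle
          _ ≤ 1 + (p.length : ℕ∞) := add_le_add hG1 hc
          _ = (p.length : ℕ∞) + 1 := add_comm _ _
      · right
        refine ⟨a', hau, y, hy, ?_⟩
        rw [SimpleGraph.edist_self, zero_add]
        calc G.edist y b' ≤ G.edist b'' x + G.edist y b' := le_add_self
          _ ≤ (p.length : ℕ∞) := hsum
          _ ≤ (p.length : ℕ∞) + 1 := le_self_add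

end Aux

namespace Aux
open SimpleGraph
variable {V : Type*}

lemma setDist_le_edist' (G : SimpleGraph V) {X Y : Set V} {x y : V} (hx : x ∈ X) (hy : y ∈ Y) :
    setDist G X Y ≤ G.edist x y :=
  le_trans (iInf₂_le x hx) (iInf₂_le y hy)

lemma exists_of_setDist_lt' {G : SimpleGraph V} {X Y : Set V} {c : ℕ∞}
    (h : setDist G X Y < c) : ∃ x ∈ X, ∃ y ∈ Y, G.edist x y < c := by
  simp only [setDist, iInf_lt_iff] at h
  obtain ⟨x, hx, y, hy, h⟩ := h
  exact ⟨x, hx, y, hy, h⟩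

lemma setDist_le_of_adj (G : SimpleGraph V) {a b : V} (h : G.Adj a b) (S : Set V) :
    setDist G {a} S ≤ setDist G {b} S + 1 := by
  rcases eq_or_ne (setDist G {b} S) ⊤ with ht | ht
  · simp [ht]
  · obtain ⟨n, hn⟩ := WithTop.ne_top_iff_exists.mp ht
    rw [← hn]
    have hlt : setDist G {b} S < (n : ℕ∞) + 1 :=
      (ENat.lt_add_one_iff (ENat.coe_ne_top n)).mpr (le_of_eq hn.symm)
    obtain ⟨x, hx, y, hy, hxy⟩ := exists_of_setDist_lt' hlt
    rcases hx with rfl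
    have hble : G.edist x y ≤ (n : ℕ∞) := (ENat.lt_add_one_iff (by simp)).mp hxy
    calc setDist G {a} S ≤ G.edist a y := setDist_le_edist' G rfl hy
      _ ≤ G.edist a x + G.edist x y := SimpleGraph.edist_triangle
      _ ≤ 1 + n := add_le_add (le_of_eq (edist_eq_one_iff_adj.mpr h)) hble
      _ = (n : ℕ∞) + 1 := by rw [add_comm]

lemma key [DecidableEq V] (G : SimpleGraph V) (d : ℕ) (hd : 1 ≤ d)
    (𝒮 : Set (Set V))
    (hfar : ∀ S ∈ 𝒮, ∀ S' ∈ 𝒮, S ≠ S' → ((2 * d : ℕ) : ℕ∞) ≤ setDist G S S')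
    (S0 : Set V) (hS0 : S0 ∈ 𝒮) (u w : V)
    (h : ∃ S ∈ 𝒮, ∃ S' ∈ 𝒮, S ≠ S' ∧
        setDist (identify G u w)
          ((fun z => if z = w then u else z) '' S)
          ((fun z => if z = w then u else z) '' S') ≤ ((2 * d - 1 : ℕ) : ℕ∞))
    (nu nw : ℕ) (hu : setDist G {u} S0 = (nu : ℕ∞)) (hw : setDist G {w} S0 = (nw : ℕ∞))
    (heq : nu = nw) : 2 * d + 1 ≤ nu + nw := by
  obtain ⟨S, hS, S', hS', hSne, hdist⟩ := h
  have hlt : setDist (identify G u w)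
      ((fun z => if z = w then u else z) '' S)
      ((fun z => if z = w then u else z) '' S') < ((2 * d : ℕ) : ℕ∞) :=
    lt_of_le_of_lt hdist (by exact_mod_cast (by omega : 2 * d - 1 < 2 * d))
  obtain ⟨a, ha, b, hb, hab⟩ := exists_of_setDist_lt' hlt
  obtain ⟨s, hsS, rfl⟩ := ha
  obtain ⟨s', hs'S, rfl⟩ := hb
  obtain ⟨p, hp⟩ := exists_walk_of_edist_ne_top (ne_top_of_lt hab)
  set N := p.length with hNdef
  have hN : N ≤ 2 * d - 1 := by
    have : (N : ℕ∞) < ((2 * d : ℕ) : ℕ∞) := hp ▸ hab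
    have := Nat.cast_lt.mp this
    omega
  obtain ⟨b', hb', hcase⟩ := identify_lift G u w p s rfl
  -- unify into split form
  have main : ∃ x ∈ ({u, w} : Set V), ∃ y ∈ ({u, w} : Set V), ∃ r' ∈ S',
      G.edist s x + G.edist y r' ≤ (N : ℕ∞) := by
    rcases f_eq u w b' s' hb' with rfl | ⟨hbm, hsm⟩
    · rcases hcase with hc | ⟨x, hx, y, hy, hsum⟩
      · exfalso
        have h1 : ((2 * d : ℕ) : ℕ∞) ≤ setDist G S S' := hfar S hS S' hS' hSne
        have h2 : setDist G S S' ≤ (N : ℕ∞) :=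
          le_trans (setDist_le_edist' G hsS hs'S) hc
        have := Nat.cast_le.mp (le_trans h1 h2)
        omega
      · exact ⟨x, hx, y, hy, b', hs'S, hsum⟩
    · rcases hcase with hc | ⟨x, hx, y, hy, hsum⟩
      · refine ⟨b', hbm, s', hsm, s', hs'S, ?_⟩
        rw [SimpleGraph.edist_self, add_zero]
        exact hc
      · refine ⟨x, hx, s', hsm, s', hs'S, ?_⟩
        rw [SimpleGraph.edist_self, add_zero]
        exact le_trans le_self_add hsum
  obtain ⟨x, hx, y, hy, r', hr'S, hpq⟩ := main
  -- lift the two distances to ℕ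
  obtain ⟨pn, hpn0⟩ := WithTop.ne_top_iff_exists.mp
    (ne_top_of_le_ne_top (ENat.coe_ne_top N) (le_trans le_self_add hpq))
  obtain ⟨qn, hqn0⟩ := WithTop.ne_top_iff_exists.mp
    (ne_top_of_le_ne_top (ENat.coe_ne_top N) (le_trans le_add_self hpq))
  have hpn : G.edist s x = (pn : ℕ∞) := by exact_mod_cast hpn0.symm
  have hqn : G.edist y r' = (qn : ℕ∞) := by exact_mod_cast hqn0.symm
  have hpqn : pn + qn ≤ N := by
    have : (pn : ℕ∞) + (qn : ℕ∞) ≤ (N : ℕ∞) := by rw [← hpn, ← hqn]; exact hpq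
    exact_mod_cast this
  set m := nu with hmdef
  have hxm : setDist G {x} S0 = (m : ℕ∞) := by
    rcases hx with rfl | hx
    · exact hu
    · rw [Set.mem_singleton_iff] at hx; subst hx; rw [hw, heq]
  have hym : setDist G {y} S0 = (m : ℕ∞) := by
    rcases hy with rfl | hy
    · exact hu
    · rw [Set.mem_singleton_iff] at hy; subst hy; rw [hw, heq]
  have near : ∀ z : V, setDist G {z} S0 = (m : ℕ∞) →
      ∃ z0 ∈ S0, G.edist z z0 ≤ (m : ℕ∞) := by
    intro z hz
    have : setDist G {z} S0 < (m : ℕ∞) + 1 :=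
      (ENat.lt_add_one_iff (ENat.coe_ne_top m)).mpr (le_of_eq hz)
    obtain ⟨z', hz', z0, hz0, hlt'⟩ := exists_of_setDist_lt' this
    rcases hz' with rfl
    exact ⟨z0, hz0, (ENat.lt_add_one_iff (ENat.coe_ne_top m)).mp hlt'⟩
  rcases eq_or_ne S S0 with rfl | hSn0
  · -- S = S0 (S0 has been substituted by S)
    exfalso
    have hmp : m ≤ pn := by
      have : (m : ℕ∞) ≤ (pn : ℕ∞) := by
        rw [← hxm, ← hpn]
        exact le_trans (setDist_le_edist' G rfl hsS)
          (le_of_eq (SimpleGraph.edist_comm ..))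
      exact_mod_cast this
    obtain ⟨z0, hz0, hz0le⟩ := near y hym
    have h2d : 2 * d ≤ m + qn := by
      have h1 : ((2 * d : ℕ) : ℕ∞) ≤ setDist G S S' := hfar S hS S' hS' hSne
      have h2 : setDist G S S' ≤ (m : ℕ∞) + (qn : ℕ∞) := by
        calc setDist G S S' ≤ G.edist z0 r' := setDist_le_edist' G hz0 hr'S
          _ ≤ G.edist z0 y + G.edist y r' := SimpleGraph.edist_triangle
          _ ≤ (m : ℕ∞) + (qn : ℕ∞) :=
            add_le_add ((le_of_eq (SimpleGraph.edist_comm ..)).trans hz0le) (le_of_eq hqn)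
      exact_mod_cast le_trans h1 h2
    omega
  · rcases eq_or_ne S' S0 with rfl | hS'n0
    · -- S' = S0 (S0 substituted by S')
      exfalso
      have hmq : m ≤ qn := by
        have : (m : ℕ∞) ≤ (qn : ℕ∞) := by
          rw [← hym, ← hqn]
          exact setDist_le_edist' G rfl hr'S
        exact_mod_cast this
      obtain ⟨z0, hz0, hz0le⟩ := near x hxm
      have h2d : 2 * d ≤ pn + m := by
        have h1 : ((2 * d : ℕ) : ℕ∞) ≤ setDist G S S' := hfar S hS S' hS' hSne
        have h2 : setDist G S S' ≤ (pn : ℕ∞) + (m : ℕ∞) := by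
          calc setDist G S S' ≤ G.edist s z0 := setDist_le_edist' G hsS hz0
            _ ≤ G.edist s x + G.edist x z0 := SimpleGraph.edist_triangle
            _ ≤ (pn : ℕ∞) + (m : ℕ∞) := add_le_add (le_of_eq hpn) hz0le
        exact_mod_cast le_trans h1 h2
      omega
    · obtain ⟨z0, hz0, hz0le⟩ := near x hxm
      obtain ⟨z1, hz1, hz1le⟩ := near y hym
      have h2d1 : 2 * d ≤ pn + m := by
        have h1 : ((2 * d : ℕ) : ℕ∞) ≤ setDist G S S0 := hfar S hS S0 hS0 hSn0
        have h2 : setDist G S S0 ≤ (pn : ℕ∞) + (m : ℕ∞) := by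
          calc setDist G S S0 ≤ G.edist s z0 := setDist_le_edist' G hsS hz0
            _ ≤ G.edist s x + G.edist x z0 := SimpleGraph.edist_triangle
            _ ≤ (pn : ℕ∞) + (m : ℕ∞) := add_le_add (le_of_eq hpn) hz0le
        exact_mod_cast le_trans h1 h2
      have h2d2 : 2 * d ≤ m + qn := by
        have h1 : ((2 * d : ℕ) : ℕ∞) ≤ setDist G S0 S' := hfar S0 hS0 S' hS' (Ne.symm hS'n0)
        have h2 : setDist G S0 S' ≤ (m : ℕ∞) + (qn : ℕ∞) := by
          calc setDist G S0 S' ≤ G.edist z1 r' := setDist_le_edist' G hz1 hr'S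
            _ ≤ G.edist z1 y + G.edist y r' := SimpleGraph.edist_triangle
            _ ≤ (m : ℕ∞) + (qn : ℕ∞) :=
              add_le_add ((le_of_eq (SimpleGraph.edist_comm ..)).trans hz1le) (le_of_eq hqn)
        exact_mod_cast le_trans h1 h2
      omega

end Aux


section Main
open Aux SimpleGraph

theorem stmt_11' {V : Type*} [Fintype V] [DecidableEq V]
    (G : SimpleGraph V) (d : ℕ) (hd : 1 ≤ d)
    (𝒮 : Set (Set V))
    (hfar : ∀ S ∈ 𝒮, ∀ S' ∈ 𝒮, S ≠ S' → ((2 * d : ℕ) : ℕ∞) ≤ setDist G S S')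
    (S0 : Set V) (hS0 : S0 ∈ 𝒮)
    (v1 v2 v3 v4 : V)
    (hnodup : [v1, v2, v3, v4].Nodup)
    (h12 : G.Adj v1 v2) (h23 : G.Adj v2 v3) (h34 : G.Adj v3 v4) (h41 : G.Adj v4 v1)
    (hclose : setDist G {v1, v2, v3, v4} S0 ≤ ((d - 1 : ℕ) : ℕ∞))
    (h13 : ∃ S ∈ 𝒮, ∃ S' ∈ 𝒮, S ≠ S' ∧
        setDist (identify G v1 v3)
          ((fun w => if w = v3 then v1 else w) '' S)
          ((fun w => if w = v3 then v1 else w) '' S') ≤ ((2 * d - 1 : ℕ) : ℕ∞))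
    (h24 : ∃ S ∈ 𝒮, ∃ S' ∈ 𝒮, S ≠ S' ∧
        setDist (identify G v2 v4)
          ((fun w => if w = v4 then v2 else w) '' S)
          ((fun w => if w = v4 then v2 else w) '' S') ≤ ((2 * d - 1 : ℕ) : ℕ∞)) :
    STight G S0 v1 v2 v3 v4 := by
  -- adjacency bounds
  have hb12 := setDist_le_of_adj G h12 S0
  have hb21 := setDist_le_of_adj G h12.symm S0
  have hb23 := setDist_le_of_adj G h23 S0
  have hb32 := setDist_le_of_adj G h23.symm S0
  have hb34 := setDist_le_of_adj G h34 S0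
  have hb43 := setDist_le_of_adj G h34.symm S0
  have hb41 := setDist_le_of_adj G h41 S0
  have hb14 := setDist_le_of_adj G h41.symm S0
  -- some vertex of the cycle is close to S0
  have hmin : setDist G {v1} S0 ≤ ((d - 1 : ℕ) : ℕ∞) ∨
      setDist G {v2} S0 ≤ ((d - 1 : ℕ) : ℕ∞) ∨
      setDist G {v3} S0 ≤ ((d - 1 : ℕ) : ℕ∞) ∨
      setDist G {v4} S0 ≤ ((d - 1 : ℕ) : ℕ∞) := by
    have hlt : setDist G {v1, v2, v3, v4} S0 < ((d : ℕ) : ℕ∞) :=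
      lt_of_le_of_lt hclose (by exact_mod_cast (by omega : d - 1 < d))
    obtain ⟨x, hx, y, hy, hxy⟩ := exists_of_setDist_lt' hlt
    obtain ⟨k, hk⟩ := WithTop.ne_top_iff_exists.mp (ne_top_of_lt hxy)
    have hk' : G.edist x y = (k : ℕ∞) := by exact_mod_cast hk.symm
    have hkd : k ≤ d - 1 := by
      have : (k : ℕ∞) < ((d : ℕ) : ℕ∞) := hk' ▸ hxy
      have := Nat.cast_lt.mp this
      omega
    have hle : ∀ z : V, z = x → setDist G {z} S0 ≤ ((d - 1 : ℕ) : ℕ∞) := by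
      rintro z rfl
      calc setDist G {z} S0 ≤ G.edist z y := setDist_le_edist' G rfl hy
        _ = (k : ℕ∞) := hk'
        _ ≤ ((d - 1 : ℕ) : ℕ∞) := Nat.cast_le.mpr hkd
    rcases hx with rfl | rfl | rfl | hx
    · exact Or.inl (hle _ rfl)
    · exact Or.inr (Or.inl (hle _ rfl))
    · exact Or.inr (Or.inr (Or.inl (hle _ rfl)))
    · rw [Set.mem_singleton_iff] at hx
      exact Or.inr (Or.inr (Or.inr (hle _ hx.symm)))
  -- finiteness of the four distances
  have addne : ∀ {a : ℕ∞}, a ≠ ⊤ → a + 1 ≠ ⊤ := fun h => WithTop.add_ne_top.mpr ⟨h, ENat.one_ne_top⟩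
  have hfin : setDist G {v1} S0 ≠ ⊤ ∧ setDist G {v2} S0 ≠ ⊤ ∧
      setDist G {v3} S0 ≠ ⊤ ∧ setDist G {v4} S0 ≠ ⊤ := by
    rcases hmin with h | h | h | h
    · have f1 : setDist G {v1} S0 ≠ ⊤ := ne_top_of_le_ne_top (ENat.coe_ne_top _) h
      have f2 := ne_top_of_le_ne_top (addne f1) hb21
      have f4 := ne_top_of_le_ne_top (addne f1) hb41
      have f3 := ne_top_of_le_ne_top (addne f2) hb32
      exact ⟨f1, f2, f3, f4⟩
    · have f2 : setDist G {v2} S0 ≠ ⊤ := ne_top_of_le_ne_top (ENat.coe_ne_top _) h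
      have f1 := ne_top_of_le_ne_top (addne f2) hb12
      have f3 := ne_top_of_le_ne_top (addne f2) hb32
      have f4 := ne_top_of_le_ne_top (addne f3) hb43
      exact ⟨f1, f2, f3, f4⟩
    · have f3 : setDist G {v3} S0 ≠ ⊤ := ne_top_of_le_ne_top (ENat.coe_ne_top _) h
      have f2 := ne_top_of_le_ne_top (addne f3) hb23
      have f4 := ne_top_of_le_ne_top (addne f3) hb43
      have f1 := ne_top_of_le_ne_top (addne f2) hb12
      exact ⟨f1, f2, f3, f4⟩
    · have f4 : setDist G {v4} S0 ≠ ⊤ := ne_top_of_le_ne_top (ENat.coe_ne_top _) h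
      have f1 := ne_top_of_le_ne_top (addne f4) hb14
      have f3 := ne_top_of_le_ne_top (addne f4) hb34
      have f2 := ne_top_of_le_ne_top (addne f1) hb21
      exact ⟨f1, f2, f3, f4⟩
  obtain ⟨f1, f2, f3, f4⟩ := hfin
  obtain ⟨n1, hn1⟩ := WithTop.ne_top_iff_exists.mp f1
  obtain ⟨n2, hn2⟩ := WithTop.ne_top_iff_exists.mp f2
  obtain ⟨n3, hn3⟩ := WithTop.ne_top_iff_exists.mp f3
  obtain ⟨n4, hn4⟩ := WithTop.ne_top_iff_exists.mp f4
  have hn1' : setDist G {v1} S0 = ((n1 : ℕ) : ℕ∞) := by exact_mod_cast hn1.symm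
  have hn2' : setDist G {v2} S0 = ((n2 : ℕ) : ℕ∞) := by exact_mod_cast hn2.symm
  have hn3' : setDist G {v3} S0 = ((n3 : ℕ) : ℕ∞) := by exact_mod_cast hn3.symm
  have hn4' : setDist G {v4} S0 = ((n4 : ℕ) : ℕ∞) := by exact_mod_cast hn4.symm
  have cast_le : ∀ {a b : ℕ}, ((a : ℕ) : ℕ∞) ≤ ((b : ℕ) : ℕ∞) + 1 → a ≤ b + 1 := by
    intro a b h
    have : ((a : ℕ) : ℕ∞) ≤ ((b + 1 : ℕ) : ℕ∞) := by push_cast; exact h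
    exact_mod_cast this
  have a12 : n1 ≤ n2 + 1 := cast_le (hn1' ▸ hn2' ▸ hb12)
  have a21 : n2 ≤ n1 + 1 := cast_le (hn2' ▸ hn1' ▸ hb21)
  have a23 : n2 ≤ n3 + 1 := cast_le (hn2' ▸ hn3' ▸ hb23)
  have a32 : n3 ≤ n2 + 1 := cast_le (hn3' ▸ hn2' ▸ hb32)
  have a34 : n3 ≤ n4 + 1 := cast_le (hn3' ▸ hn4' ▸ hb34)
  have a43 : n4 ≤ n3 + 1 := cast_le (hn4' ▸ hn3' ▸ hb43)
  have a41 : n4 ≤ n1 + 1 := cast_le (hn4' ▸ hn1' ▸ hb41)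
  have a14 : n1 ≤ n4 + 1 := cast_le (hn1' ▸ hn4' ▸ hb14)
  have hminn : n1 ≤ d - 1 ∨ n2 ≤ d - 1 ∨ n3 ≤ d - 1 ∨ n4 ≤ d - 1 := by
    rcases hmin with h | h | h | h
    · exact Or.inl (by exact_mod_cast hn1' ▸ h)
    · exact Or.inr (Or.inl (by exact_mod_cast hn2' ▸ h))
    · exact Or.inr (Or.inr (Or.inl (by exact_mod_cast hn3' ▸ h)))
    · exact Or.inr (Or.inr (Or.inr (by exact_mod_cast hn4' ▸ h)))
  have k13 : n1 = n3 → 2 * d + 1 ≤ n1 + n3 := fun he =>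
    key G d hd 𝒮 hfar S0 hS0 v1 v3 h13 n1 n3 hn1' hn3' he
  have k24 : n2 = n4 → 2 * d + 1 ≤ n2 + n4 := fun he =>
    key G d hd 𝒮 hfar S0 hS0 v2 v4 h24 n2 n4 hn2' hn4' he
  have hne13 : n1 ≠ n3 := by
    intro he; have := k13 he; omega
  have hne24 : n2 ≠ n4 := by
    intro he; have := k24 he; omega
  have cast_succ : ∀ {a b : ℕ}, b = a + 1 →
      ((b : ℕ) : ℕ∞) = ((a : ℕ) : ℕ∞) + 1 := by
    intro a b h; subst h; push_cast; ring
  rcases hne13.lt_or_gt with h13' | h13' <;> rcases hne24.lt_or_gt with h24' | h24'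
  · -- n1 < n3, n2 < n4 : pattern (t, t, t+1, t+1)
    have e2 : n2 = n1 := by omega
    have e3 : n3 = n1 + 1 := by omega
    have e4 : n4 = n1 + 1 := by omega
    exact ⟨n1, Or.inl ⟨hn1', by rw [hn2', e2], by rw [hn3', cast_succ e3],
      by rw [hn4', cast_succ e4]⟩⟩
  · -- n1 < n3, n4 < n2 : pattern (t, t+1, t+1, t)
    have e4 : n4 = n1 := by omega
    have e2 : n2 = n1 + 1 := by omega
    have e3 : n3 = n1 + 1 := by omega
    exact ⟨n1, Or.inr (Or.inr (Or.inr ⟨by rw [hn4', e4], hn1',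
      by rw [hn2', cast_succ e2], by rw [hn3', cast_succ e3]⟩))⟩
  · -- n3 < n1, n2 < n4 : pattern (t+1, t, t, t+1)
    have e2 : n2 = n3 := by omega
    have e4 : n4 = n3 + 1 := by omega
    have e1 : n1 = n3 + 1 := by omega
    exact ⟨n3, Or.inr (Or.inl ⟨by rw [hn2', e2], hn3',
      by rw [hn4', cast_succ e4], by rw [hn1', cast_succ e1]⟩)⟩
  · -- n3 < n1, n4 < n2 : pattern (t+1, t+1, t, t)
    have e4 : n4 = n3 := by omega
    have e1 : n1 = n3 + 1 := by omega
    have e2 : n2 = n3 + 1 := by omega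
    exact ⟨n3, Or.inr (Or.inr (Or.inl ⟨hn3', by rw [hn4', e4],
      by rw [hn1', cast_succ e1], by rw [hn2', cast_succ e2]⟩))⟩

end Main

/-- Lemma `lem:distcrit`.  Let `d ≥ 1`, let `G` be a (finite, simple) graph, and
let `𝒮` be a family of subsets of `V(G)` every two distinct members of which are
at distance at least `2d`.  Let `v₁v₂v₃v₄` be a cycle of length four in `G` at
distance at most `d − 1` from some `S₀ ∈ 𝒮`, and assume that for each pair of
diagonally opposite vertices of the cycle, some pair of distinct sets of `𝒮`
(taken to their images) are at distance at most `2d − 1` in the graph obtained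
from `G` by identifying the two vertices of the pair.  Then the cycle is
`S₀`-tight. -/
theorem stmt_11 {V : Type*} [Fintype V] [DecidableEq V]
    (G : SimpleGraph V) (d : ℕ) (hd : 1 ≤ d)
    (𝒮 : Set (Set V))
    (hfar : ∀ S ∈ 𝒮, ∀ S' ∈ 𝒮, S ≠ S' → ((2 * d : ℕ) : ℕ∞) ≤ setDist G S S')
    (S0 : Set V) (hS0 : S0 ∈ 𝒮)
    (v1 v2 v3 v4 : V)
    (hnodup : [v1, v2, v3, v4].Nodup)
    (h12 : G.Adj v1 v2) (h23 : G.Adj v2 v3) (h34 : G.Adj v3 v4) (h41 : G.Adj v4 v1)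
    (hclose : setDist G {v1, v2, v3, v4} S0 ≤ ((d - 1 : ℕ) : ℕ∞))
    (h13 : ∃ S ∈ 𝒮, ∃ S' ∈ 𝒮, S ≠ S' ∧
        setDist (identify G v1 v3)
          ((fun w => if w = v3 then v1 else w) '' S)
          ((fun w => if w = v3 then v1 else w) '' S') ≤ ((2 * d - 1 : ℕ) : ℕ∞))
    (h24 : ∃ S ∈ 𝒮, ∃ S' ∈ 𝒮, S ≠ S' ∧
        setDist (identify G v2 v4)
          ((fun w => if w = v4 then v2 else w) '' S)
          ((fun w => if w = v4 then v2 else w) '' S') ≤ ((2 * d - 1 : ℕ) : ℕ∞)) :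
    STight G S0 v1 v2 v3 v4 := by
  exact stmt_11' G d hd 𝒮 hfar S0 hS0 v1 v2 v3 v4 hnodup h12 h23 h34 h41 hclose h13 h24
end
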